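/- arXiv:2512.21007 — 5 statements merged into one kernel-verified Lean document; each statement's English description precedes it below -/
import Mathlib

section
/- Let f be in the class S with Taylor coefficients a_2, a_3, and let A_2, A_3 be the corresponding coefficients of the inverse function. Then the Toeplitz determinants satisfy T_{2,1}(f^{-1}) = T_{2,1}(f) and T_{3,1}(f^{-1}) = T_{3,1}(f), i.e. 1 - |A_2|^2 = 1 - |a_2|^2 and 2·Re(A_2^2·conj(A_3)) - 2|A_2|^2 - |A_3|^2 + 1 = 2·Re(a_2^2·conj(a_3)) - 2|a_2|^2 - |a_3|^2 + 1. -/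
open Complex Metric Set

/-!
Completing the square, `T_{3,1} = (1 - |a₂|²)² - |a₃ - a₂²|²`. Passing to the inverse function
replaces `a₂` by `-a₂`, which keeps `|a₂|` and `a₂²`, and replaces `a₃` by `2a₂² - a₃`, its
reflection through `a₂²`, which keeps `|a₃ - a₂²|`.
-/

/-- `T_{3,1}(f)` for `f(z) = z + a₂ z² + a₃ z³ + ⋯`. -/
noncomputable def toeplitzDetThree (a₂ a₃ : ℂ) : ℝ :=
  2 * (a₂ ^ 2 * (starRingEnd ℂ) a₃).re - 2 * ‖a₂‖ ^ 2 - ‖a₃‖ ^ 2 + 1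

theorem toeplitzDetThree_eq (a₂ a₃ : ℂ) :
    toeplitzDetThree a₂ a₃ = (1 - ‖a₂‖ ^ 2) ^ 2 - ‖a₃ - a₂ ^ 2‖ ^ 2 := by
  have h : ‖a₃ - a₂ ^ 2‖ ^ 2 = ‖a₃‖ ^ 2 + ‖a₂‖ ^ 4 - 2 * (a₂ ^ 2 * (starRingEnd ℂ) a₃).re := by
    rw [Complex.sq_norm, Complex.sq_norm, normSq_sub, ← conj_re, map_mul, conj_conj,
      mul_comm (starRingEnd ℂ a₃), show ‖a₂‖ ^ 4 = normSq (a₂ ^ 2) by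
        rw [normSq_eq_norm_sq, norm_pow]; ring]
  rw [toeplitzDetThree, h]
  ring

theorem toeplitzDetThree_neg_two_sq_sub (a₂ a₃ : ℂ) :
    toeplitzDetThree (-a₂) (2 * a₂ ^ 2 - a₃) = toeplitzDetThree a₂ a₃ := by
  have reflect : 2 * a₂ ^ 2 - a₃ - (-a₂) ^ 2 = -(a₃ - a₂ ^ 2) := by ring
  rw [toeplitzDetThree_eq, toeplitzDetThree_eq, reflect, norm_neg, norm_neg]

theorem toeplitz_inverse_eq_general (a₂ a₃ A₂ A₃ : ℂ)
    (hA₂ : A₂ = -a₂)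
    (hA₃ : A₃ = 2 * a₂ ^ 2 - a₃) :
    1 - ‖A₂‖ ^ 2 = 1 - ‖a₂‖ ^ 2 ∧
    2 * (A₂ ^ 2 * (starRingEnd ℂ) A₃).re - 2 * ‖A₂‖ ^ 2 - ‖A₃‖ ^ 2 + 1 =
      2 * (a₂ ^ 2 * (starRingEnd ℂ) a₃).re - 2 * ‖a₂‖ ^ 2 - ‖a₃‖ ^ 2 + 1 := by
  subst hA₂ hA₃
  exact ⟨by rw [norm_neg], toeplitzDetThree_neg_two_sq_sub a₂ a₃⟩

theorem toeplitz_inverse_eq (f : ℂ → ℂ)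
    (hf : AnalyticOnNhd ℂ f (ball (0:ℂ) 1))
    (hinj : Set.InjOn f (ball (0:ℂ) 1))
    (hf0 : f 0 = 0) (hf1 : deriv f 0 = 1)
    (a₂ a₃ A₂ A₃ : ℂ)
    (ha₂ : a₂ = iteratedDeriv 2 f 0 / 2)
    (ha₃ : a₃ = iteratedDeriv 3 f 0 / 6)
    (hA₂ : A₂ = -a₂)
    (hA₃ : A₃ = 2 * a₂ ^ 2 - a₃) :
    1 - ‖A₂‖ ^ 2 = 1 - ‖a₂‖ ^ 2 ∧
    2 * (A₂ ^ 2 * (starRingEnd ℂ) A₃).re - 2 * ‖A₂‖ ^ 2 - ‖A₃‖ ^ 2 + 1 =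
      2 * (a₂ ^ 2 * (starRingEnd ℂ) a₃).re - 2 * ‖a₂‖ ^ 2 - ‖a₃‖ ^ 2 + 1 :=
  toeplitz_inverse_eq_general a₂ a₃ A₂ A₃ hA₂ hA₃
end

section
/- Let f be in the class R (bounded turning) and let A_2, A_3 be the coefficients of the inverse function. Then the symmetric Toeplitz determinant satisfies |T^s_{2,2}(f^{-1})| = |A_2^2 - A_3^2| ≤ 25/9. -/
/-!
Put `p = f'`, so `p 0 = 1` and `Re p ≥ 0` on the disk, and let `c k = p⁽ᵏ⁾(0) / k!`. For `r < 1`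
the weight `w θ = Re p (r e^{iθ}) ≥ 0` has moments `∫ w = 2π` and `∫ w e^{-ikθ} = π r^k c k`
for `k ≥ 1`. For any weight `w ≥ 0`, `|u| = 1` and `mₖ = ∫ w uᵏ`, comparing
`|∫ w (m₀ u - m₁)²|` with `∫ w |m₀ u - m₁|²` gives `|m₀ m₂ - m₁²| ≤ m₀² - |m₁|²`; letting `r → 1`
this is Carathéodory's `|c₂ - c₁² / 2| ≤ 2 - |c₁|² / 2`. Since `A₂ = -c₁ / 2` and
`A₃ = c₁² / 2 - c₂ / 3`, the triangle inequality bounds `|A₂² - A₃²|` by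
`|c₁|² / 4 + ((|c₁|² + 4) / 6)²`, which is at most `25 / 9` because `|c₁| ≤ 2`.
-/

open Complex Metric Set

open MeasureTheory Filter Topology
open scoped Real ComplexConjugate Nat

theorem norm_integral_mul_integral_sq_sub_sq_le {α : Type*} [MeasurableSpace α] {μ : Measure α}
    {w : α → ℝ} {u : α → ℂ} (hw : Integrable w μ) (hw0 : 0 ≤ w)
    (hu : AEStronglyMeasurable u μ) (hu1 : ∀ x, ‖u x‖ = 1) :
    ‖(∫ x, w x ∂μ : ℂ) * (∫ x, w x * u x ^ 2 ∂μ) - (∫ x, w x * u x ∂μ) ^ 2‖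
      ≤ (∫ x, w x ∂μ) ^ 2 - ‖∫ x, w x * u x ∂μ‖ ^ 2 := by
  rw [integral_complex_ofReal]
  set W := ∫ x, w x ∂μ
  set M₁ : ℂ := ∫ x, w x * u x ∂μ
  set M₂ : ℂ := ∫ x, w x * u x ^ 2 ∂μ
  have hint (k : ℕ) : Integrable (fun x => (w x : ℂ) * u x ^ k) μ :=
    hw.ofReal.mul_bdd (c := 1) (hu.pow k) (ae_of_all _ fun x => by simp [hu1])
  have norm_le (k : ℕ) : ‖∫ x, (w x : ℂ) * u x ^ k ∂μ‖ ≤ W :=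
    norm_integral_le_of_norm_le hw
      (ae_of_all _ fun x => by simp [hu1, abs_of_nonneg (hw0 x)])
  obtain hW | hW := (integral_nonneg (μ := μ) hw0).eq_or_lt
  · have hM₁ : M₁ = 0 := norm_le_zero_iff.1 (by simpa [hW] using norm_le 1)
    have hM₂ : M₂ = 0 := norm_le_zero_iff.1 (by simpa [hW] using norm_le 2)
    simp [hM₁, hM₂, W, ← hW]
  have complex_side : ∫ x, (w x : ℂ) * (W * u x - M₁) ^ 2 ∂μ = W * (W * M₂ - M₁ ^ 2) := by
    have expand (x : α) : (w x : ℂ) * (W * u x - M₁) ^ 2 = (W : ℂ) ^ 2 * (w x * u x ^ 2)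
        - 2 * W * M₁ * (w x * u x ^ 1) + M₁ ^ 2 * (w x * u x ^ 0) := by ring
    simp_rw [expand]
    rw [integral_add, integral_sub, integral_const_mul, integral_const_mul, integral_const_mul]
    · simp only [pow_one, pow_zero, mul_one, integral_complex_ofReal]
      ring
    all_goals first
      | exact (hint _).const_mul _
      | exact ((hint 2).const_mul _).sub ((hint 1).const_mul _)
  have real_side : ∫ x, w x * ‖W * u x - M₁‖ ^ 2 ∂μ = W * (W ^ 2 - ‖M₁‖ ^ 2) := by
    have expand (x : α) : w x * ‖W * u x - M₁‖ ^ 2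
        = (W ^ 2 + ‖M₁‖ ^ 2) * w x - 2 * W * RCLike.re ((w x : ℂ) * u x * conj M₁) := by
      rw [Complex.sq_norm, normSq_sub, normSq_mul, normSq_ofReal, ← Complex.sq_norm (u x), hu1,
        ← Complex.sq_norm M₁, RCLike.re_to_complex, mul_assoc (w x : ℂ), re_ofReal_mul,
        mul_assoc (W : ℂ), re_ofReal_mul]
      ring
    simp_rw [expand]
    have hint' : Integrable (fun x => (w x : ℂ) * u x * conj M₁) μ := by
      simpa using (hint 1).mul_const (conj M₁)
    rw [integral_sub (hw.const_mul _) (hint'.re.const_mul _), integral_const_mul,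
      integral_const_mul, integral_re hint', integral_mul_const, mul_conj, ← Complex.sq_norm]
    simp only [RCLike.re_to_complex, ofReal_re]
    ring
  refine le_of_mul_le_mul_left ?_ hW
  calc W * ‖(W : ℂ) * M₂ - M₁ ^ 2‖ = ‖∫ x, (w x : ℂ) * (W * u x - M₁) ^ 2 ∂μ‖ := by
        rw [complex_side, norm_mul, norm_real, Real.norm_of_nonneg hW.le]
    _ ≤ ∫ x, ‖(w x : ℂ) * (W * u x - M₁) ^ 2‖ ∂μ := norm_integral_le_integral_norm _
    _ = ∫ x, w x * ‖W * u x - M₁‖ ^ 2 ∂μ := by simp [abs_of_nonneg (hw0 _)]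
    _ = W * (W ^ 2 - ‖M₁‖ ^ 2) := real_side

section CircleMoments

variable {p : ℂ → ℂ} {r : ℝ}

theorem circleIntegral_eq_I_mul_integral (f : ℂ → ℂ) (r : ℝ) :
    (∮ z in C(0, r), f z) = I * ∫ θ in 0..2 * π, circleMap 0 r θ * f (circleMap 0 r θ) := by
  rw [circleIntegral, ← intervalIntegral.integral_const_mul]
  refine intervalIntegral.integral_congr fun θ _ => ?_
  rw [deriv_circleMap, smul_eq_mul]
  ring

theorem integral_div_circleMap_pow (hr : 0 < r) (hp : DifferentiableOn ℂ p (closedBall 0 r))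
    (n : ℕ) :
    ∫ θ in 0..2 * π, p (circleMap 0 r θ) / circleMap 0 r θ ^ n
      = 2 * π * (iteratedDeriv n p 0 / n !) := by
  have cauchy := hp.circleIntegral_one_div_sub_center_pow_smul hr n
  rw [circleIntegral_eq_I_mul_integral] at cauchy
  have hz (θ : ℝ) : circleMap 0 r θ ≠ 0 := circleMap_ne_center hr.ne'
  rw [intervalIntegral.integral_congr (g := fun θ => p (circleMap 0 r θ) / circleMap 0 r θ ^ n)
    fun θ _ => by simp only [sub_zero, smul_eq_mul, pow_succ]; field_simp [hz θ]] at cauchy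
  have : (n ! : ℂ) ≠ 0 := by exact_mod_cast n.factorial_ne_zero
  rw [smul_eq_mul] at cauchy
  field_simp at cauchy ⊢
  linear_combination cauchy

theorem integral_circleMap_pow_succ_mul (hr : 0 ≤ r) (hp : DifferentiableOn ℂ p (closedBall 0 r))
    (n : ℕ) :
    ∫ θ in 0..2 * π, circleMap 0 r θ ^ (n + 1) * p (circleMap 0 r θ) = 0 := by
  have hg : DifferentiableOn ℂ (fun z => z ^ n * p z) (closedBall 0 r) :=
    (differentiable_pow n).differentiableOn.mul hp
  have cauchy := (hg.mono closure_ball_subset_closedBall).diffContOnCl.circleIntegral_eq_zero hr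
  rw [circleIntegral_eq_I_mul_integral, mul_eq_zero] at cauchy
  calc _ = ∫ θ in 0..2 * π, circleMap 0 r θ * (circleMap 0 r θ ^ n * p (circleMap 0 r θ)) :=
        intervalIntegral.integral_congr fun θ _ => by ring
    _ = 0 := cauchy.resolve_left I_ne_zero

theorem continuous_comp_circleMap (hr : 0 ≤ r) (hp : DifferentiableOn ℂ p (closedBall 0 r)) :
    Continuous fun θ => p (circleMap 0 r θ) :=
  hp.continuousOn.comp_continuous (continuous_circleMap 0 r) fun θ =>
    sphere_subset_closedBall (circleMap_mem_sphere 0 hr θ)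

theorem integral_re_circleMap (hr : 0 < r) (hp : DifferentiableOn ℂ p (closedBall 0 r)) :
    ∫ θ in 0..2 * π, (p (circleMap 0 r θ)).re = 2 * π * (p 0).re := by
  have mean := integral_div_circleMap_pow hr hp 0
  simp only [pow_zero, div_one, iteratedDeriv_zero, Nat.factorial_zero, Nat.cast_one] at mean
  have re_comm := intervalIntegral.intervalIntegral_re (μ := volume)
    ((continuous_comp_circleMap hr.le hp).intervalIntegrable 0 (2 * π))
  simp only [RCLike.re_to_complex] at re_comm
  rw [re_comm, mean]
  simp

theorem integral_re_div_circleMap_pow_succ (hr : 0 < r)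
    (hp : DifferentiableOn ℂ p (closedBall 0 r)) (n : ℕ) :
    ∫ θ in 0..2 * π, ((p (circleMap 0 r θ)).re : ℂ) / circleMap 0 r θ ^ (n + 1)
      = π * (iteratedDeriv (n + 1) p 0 / (n + 1)!) := by
  have hz (θ : ℝ) : circleMap 0 r θ ≠ 0 := circleMap_ne_center hr.ne'
  have hconj (θ : ℝ) : conj (circleMap 0 r θ) = r ^ 2 / circleMap 0 r θ := by
    rw [eq_div_iff (hz θ), mul_comm, mul_conj, normSq_eq_norm_sq, norm_circleMap_zero,
      abs_of_pos hr]
    push_cast; ring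
  -- On the circle `conj z = r ^ 2 / z`, so the conjugate half is a vanishing Cauchy integral.
  have re_split (θ : ℝ) : ((p (circleMap 0 r θ)).re : ℂ) / circleMap 0 r θ ^ (n + 1)
      = p (circleMap 0 r θ) / circleMap 0 r θ ^ (n + 1) / 2
        + conj (circleMap 0 r θ ^ (n + 1) * p (circleMap 0 r θ)) / (2 * r ^ (2 * (n + 1))) := by
    rw [re_eq_add_conj, map_mul, map_pow, hconj]
    have : (r : ℂ) ≠ 0 := by exact_mod_cast hr.ne'
    field_simp
    ring
  have hc := continuous_comp_circleMap hr.le hp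
  have hcz : Continuous (circleMap 0 r) := continuous_circleMap 0 r
  rw [intervalIntegral.integral_congr fun θ _ => re_split θ, intervalIntegral.integral_add,
    intervalIntegral.integral_div, intervalIntegral.integral_div, intervalIntegral.intervalIntegral_conj,
    integral_circleMap_pow_succ_mul hr.le hp, map_zero, integral_div_circleMap_pow hr hp]
  · ring
  · exact ((hc.div (hcz.pow _) fun θ => pow_ne_zero _ (hz θ)).div_const _).intervalIntegrable _ _
  · exact ((continuous_conj.comp ((hcz.pow _).mul hc)).div_const _).intervalIntegrable _ _

theorem sq_mul_norm_iteratedDeriv_two_sub_sq_add_sq_le (hr : 0 < r) (hp : DifferentiableOn ℂ p (closedBall 0 r))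
    (hp0 : p 0 = 1) (hre : ∀ z ∈ sphere (0 : ℂ) r, 0 ≤ (p z).re) :
    r ^ 2 * (‖iteratedDeriv 2 p 0 - deriv p 0 ^ 2‖ + ‖deriv p 0‖ ^ 2) ≤ 4 := by
  have hz (θ : ℝ) : circleMap 0 r θ ≠ 0 := circleMap_ne_center hr.ne'
  have moments := norm_integral_mul_integral_sq_sub_sq_le
    (μ := volume.restrict (Ioc 0 (2 * π)))
    (w := fun θ => (p (circleMap 0 r θ)).re) (u := fun θ => r / circleMap 0 r θ)
    (continuous_re.comp (continuous_comp_circleMap hr.le hp)).integrableOn_Ioc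
    (fun θ => hre _ (circleMap_mem_sphere 0 hr.le θ))
    (continuous_const.div (continuous_circleMap 0 r) hz).aestronglyMeasurable
    (fun θ => by simp [norm_circleMap_zero, abs_of_pos hr, hr.ne'])
  simp only [← intervalIntegral.integral_of_le Real.two_pi_pos.le] at moments
  have M₁ : ∫ θ in 0..2 * π, ((p (circleMap 0 r θ)).re : ℂ) * (r / circleMap 0 r θ)
      = r * π * deriv p 0 := by
    simp_rw [mul_div, mul_comm _ (r : ℂ), ← mul_div]
    rw [intervalIntegral.integral_const_mul]
    simpa [mul_assoc] using congrArg ((r : ℂ) * ·) (integral_re_div_circleMap_pow_succ hr hp 0)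
  have M₂ : ∫ θ in 0..2 * π, ((p (circleMap 0 r θ)).re : ℂ) * (r / circleMap 0 r θ) ^ 2
      = r ^ 2 * π * iteratedDeriv 2 p 0 / 2 := by
    simp_rw [div_pow, mul_div, mul_comm _ ((r : ℂ) ^ 2), ← mul_div]
    rw [intervalIntegral.integral_const_mul, integral_re_div_circleMap_pow_succ hr hp 1]
    simp only [Nat.reduceAdd, Nat.factorial_two, Nat.cast_ofNat]
    ring
  have expand : ((2 * π : ℝ) : ℂ) * (r ^ 2 * π * iteratedDeriv 2 p 0 / 2) - (r * π * deriv p 0) ^ 2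
      = ((π * r) ^ 2 : ℝ) * (iteratedDeriv 2 p 0 - deriv p 0 ^ 2) := by
    push_cast; ring
  rw [intervalIntegral.integral_ofReal, integral_re_circleMap hr hp, M₁, M₂, hp0, one_re, mul_one,
    expand, norm_mul, norm_mul, norm_mul, norm_real, norm_real, norm_real,
    Real.norm_of_nonneg (by positivity), Real.norm_of_nonneg hr.le,
    Real.norm_of_nonneg Real.pi_pos.le] at moments
  refine le_of_mul_le_mul_left ?_ (pow_pos Real.pi_pos 2)
  linarith

theorem norm_iteratedDeriv_two_sub_sq_add_sq_le (hp : DifferentiableOn ℂ p (ball 0 1))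
    (hp0 : p 0 = 1) (hre : ∀ z ∈ ball (0 : ℂ) 1, 0 ≤ (p z).re) :
    ‖iteratedDeriv 2 p 0 - deriv p 0 ^ 2‖ + ‖deriv p 0‖ ^ 2 ≤ 4 := by
  set C := ‖iteratedDeriv 2 p 0 - deriv p 0 ^ 2‖ + ‖deriv p 0‖ ^ 2
  have hlim : Tendsto (fun r : ℝ => r ^ 2 * C) (𝓝[<] 1) (𝓝 C) := by
    have hcont : Continuous fun r : ℝ => r ^ 2 * C := by fun_prop
    simpa using (hcont.tendsto 1).mono_left nhdsWithin_le_nhds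
  refine le_of_tendsto hlim ?_
  filter_upwards [Ioo_mem_nhdsLT one_pos] with r ⟨hr0, hr1⟩
  have hsub : closedBall (0 : ℂ) r ⊆ ball 0 1 := closedBall_subset_ball hr1
  exact sq_mul_norm_iteratedDeriv_two_sub_sq_add_sq_le hr0 (hp.mono hsub) hp0 fun z hz =>
    hre z (hsub (sphere_subset_closedBall hz))

end CircleMoments

theorem norm_sq_sub_sq_le_of_norm_sub_sq_add_sq_le {q₁ q₂ : ℂ}
    (h : ‖q₂ - q₁ ^ 2‖ + ‖q₁‖ ^ 2 ≤ 4) :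
    ‖(q₁ / 2) ^ 2 - (q₁ ^ 2 / 2 - q₂ / 6) ^ 2‖ ≤ 25 / 9 := by
  have hA₃ : ‖q₁ ^ 2 / 2 - q₂ / 6‖ ≤ (‖q₁‖ ^ 2 + 4) / 6 := by
    have : ‖2 * q₁ ^ 2 - (q₂ - q₁ ^ 2)‖ ≤ 2 * ‖q₁‖ ^ 2 + ‖q₂ - q₁ ^ 2‖ := by
      refine (norm_sub_le _ _).trans_eq ?_
      rw [norm_mul, norm_pow]
      norm_num
    rw [show q₁ ^ 2 / 2 - q₂ / 6 = (2 * q₁ ^ 2 - (q₂ - q₁ ^ 2)) / 6 by ring, norm_div]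
    norm_num
    linarith
  have hq₁ : ‖q₁‖ ^ 2 ≤ 4 := by linarith [norm_nonneg (q₂ - q₁ ^ 2)]
  calc ‖(q₁ / 2) ^ 2 - (q₁ ^ 2 / 2 - q₂ / 6) ^ 2‖
      ≤ ‖q₁‖ ^ 2 / 4 + ‖q₁ ^ 2 / 2 - q₂ / 6‖ ^ 2 := by
        refine (norm_sub_le _ _).trans_eq ?_
        rw [norm_pow, norm_pow, norm_div]
        norm_num
        ring
    _ ≤ ‖q₁‖ ^ 2 / 4 + ((‖q₁‖ ^ 2 + 4) / 6) ^ 2 := by gcongr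
    _ ≤ 25 / 9 := by nlinarith [sq_nonneg (‖q₁‖)]

theorem symToeplitz22_R_general (f : ℂ → ℂ)
    (hf : AnalyticOnNhd ℂ f (ball (0:ℂ) 1))
    (hf1 : deriv f 0 = 1)
    (hre : ∀ z ∈ ball (0:ℂ) 1, 0 < (deriv f z).re)
    (a₂ a₃ A₂ A₃ : ℂ)
    (ha₂ : a₂ = iteratedDeriv 2 f 0 / 2)
    (ha₃ : a₃ = iteratedDeriv 3 f 0 / 6)
    (hA₂ : A₂ = -a₂)
    (hA₃ : A₃ = 2 * a₂ ^ 2 - a₃) :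
    ‖A₂ ^ 2 - A₃ ^ 2‖ ≤ 25 / 9 := by
  have h₂ : iteratedDeriv 2 f 0 = deriv (deriv f) 0 := by
    rw [iteratedDeriv_succ', iteratedDeriv_one]
  have h₃ : iteratedDeriv 3 f 0 = iteratedDeriv 2 (deriv f) 0 := by
    rw [iteratedDeriv_succ']
  have bound := norm_iteratedDeriv_two_sub_sq_add_sq_le hf.deriv.differentiableOn hf1
    fun z hz => (hre z hz).le
  convert norm_sq_sub_sq_le_of_norm_sub_sq_add_sq_le bound using 2
  rw [hA₂, hA₃, ha₂, ha₃, h₂, h₃]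
  ring

theorem symToeplitz22_R (f : ℂ → ℂ)
    (hf : AnalyticOnNhd ℂ f (ball (0:ℂ) 1))
    (hf0 : f 0 = 0) (hf1 : deriv f 0 = 1)
    (hre : ∀ z ∈ ball (0:ℂ) 1, 0 < (deriv f z).re)
    (a₂ a₃ A₂ A₃ : ℂ)
    (ha₂ : a₂ = iteratedDeriv 2 f 0 / 2)
    (ha₃ : a₃ = iteratedDeriv 3 f 0 / 6)
    (hA₂ : A₂ = -a₂)
    (hA₃ : A₃ = 2 * a₂ ^ 2 - a₃) :
    ‖A₂ ^ 2 - A₃ ^ 2‖ ≤ 25 / 9 :=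
  symToeplitz22_R_general f hf hf1 hre a₂ a₃ A₂ A₃ ha₂ ha₃ hA₂ hA₃
end

section
/- Let f be in the class R (bounded turning) and let A_3, A_4 be the coefficients of the inverse function. Then the symmetric Toeplitz determinant satisfies |T^s_{2,3}(f^{-1})| = |A_3^2 - A_4^2| ≤ 233/36. -/
/-!
Write `p = f'`. Since `Re p > 0` and `p 0 = 1`, the function `(p - 1) / (p + 1)` maps the disk
into itself and vanishes at `0`, so by Schwarz's lemma `p = 1 + z g (1 + p)` for some holomorphic
`g` with `|g| ≤ 1`. Comparing Taylor coefficients at `0` gives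
`A₃ = 4/3 g(0)² - 2/3 g'(0)` and `A₄ = -1/4 g''(0) + 7/3 g(0) g'(0) - 13/6 g(0)³`.
If `c = g(0)` lies in the open disk, composing `g` with the disk automorphism sending `c` to `0` and
applying Schwarz's lemma again gives `g = c + z G (1 - c̄ g)` with `|G| ≤ 1`; reading off
coefficients yields `|g'(0)| ≤ 1 - |c|²` and, applying this bound to `G`, `|g''(0)| ≤ 2 (1 - |c|²)`.
(If `|c| = 1`, `g` is constant by the maximum modulus principle.) With `t = |c|` this gives
`|A₃| ≤ 4/3` and `|A₄| ≤ (1 - t²)/2 + 7/3 t (1 - t²) + 13/6 t³ ≤ 13/6`, and `16/9 + 169/36 = 233/36`.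
-/

open Complex ComplexConjugate Metric Set Filter Topology

section Taylor

variable {𝕜 : Type*} [NontriviallyNormedField 𝕜]

theorem iteratedDeriv_succ_fun_id_mul_zero {h : 𝕜 → 𝕜} (n : ℕ)
    (hh : ContDiffAt 𝕜 (n + 1) h 0) :
    iteratedDeriv (n + 1) (fun z => z * h z) 0 = (n + 1) * iteratedDeriv n h 0 := by
  rw [iteratedDeriv_fun_mul contDiffAt_id (by exact_mod_cast hh), Finset.sum_eq_single 1]
  · simp [iteratedDeriv_fun_id_zero]
  · intro i _ hi
    simp [iteratedDeriv_fun_id_zero, hi]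
  · simp

variable [CompleteSpace 𝕜]

theorem iteratedDeriv_one_two_three_of_eventuallyEq {u v : 𝕜 → 𝕜} {c α β : 𝕜}
    (hu : AnalyticAt 𝕜 u 0) (hv : AnalyticAt 𝕜 v 0)
    (h : u =ᶠ[𝓝 0] fun z => c + z * (v z * (α + β * u z))) :
    iteratedDeriv 1 u 0 = v 0 * (α + β * u 0) ∧
    iteratedDeriv 2 u 0 =
      2 * (iteratedDeriv 1 v 0 * (α + β * u 0) + β * v 0 * iteratedDeriv 1 u 0) ∧
    iteratedDeriv 3 u 0 =
      3 * (iteratedDeriv 2 v 0 * (α + β * u 0) + 2 * β * iteratedDeriv 1 v 0 * iteratedDeriv 1 u 0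
        + β * v 0 * iteratedDeriv 2 u 0) := by
  have hw : AnalyticAt 𝕜 (fun z => α + β * u z) 0 := by fun_prop
  have key : ∀ n : ℕ, iteratedDeriv (n + 1) u 0 = (n + 1) * ∑ i ∈ Finset.range (n + 1),
      n.choose i * iteratedDeriv i v 0 * iteratedDeriv (n - i) (fun z => α + β * u z) 0 := by
    intro n
    rw [h.iteratedDeriv_eq, iteratedDeriv_const_add n.succ_pos,
      iteratedDeriv_succ_fun_id_mul_zero n (hv.fun_mul hw).contDiffAt,
      iteratedDeriv_fun_mul hv.contDiffAt hw.contDiffAt]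
  have hw_succ (k : ℕ) :
      iteratedDeriv (k + 1) (fun z => α + β * u z) 0 = β * iteratedDeriv (k + 1) u 0 := by
    simp [iteratedDeriv_const_add k.succ_pos]
  refine ⟨?_, ?_, ?_⟩ <;> rw [key] <;>
    simp only [Finset.sum_range_succ, Finset.range_one, Finset.sum_singleton, Nat.choose_self,
      Nat.choose_zero_right, Nat.choose_succ_self_right, Nat.cast_zero, Nat.cast_one,
      Nat.cast_ofNat, Nat.reduceAdd, zero_add, one_mul, tsub_zero, tsub_self, zero_tsub,
      Nat.add_one_sub_one, iteratedDeriv_zero, hw_succ] <;>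
    ring

end Taylor

theorem norm_sub_le_norm_one_sub_conj_mul {a w : ℂ} (ha : ‖a‖ ≤ 1) (hw : ‖w‖ ≤ 1) :
    ‖w - a‖ ≤ ‖1 - conj a * w‖ := by
  have hid : normSq (1 - conj a * w) - normSq (w - a) = (1 - normSq a) * (1 - normSq w) := by
    simp only [normSq_apply, sub_re, sub_im, mul_re, mul_im, conj_re, conj_im, one_re, one_im]
    ring
  have ha' : normSq a ≤ 1 := by rw [normSq_eq_norm_sq]; nlinarith [norm_nonneg a]
  have hw' : normSq w ≤ 1 := by rw [normSq_eq_norm_sq]; nlinarith [norm_nonneg w]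
  rw [norm_def, norm_def]
  exact Real.sqrt_le_sqrt (by nlinarith)

theorem norm_one_sub_conj_mul_self {c : ℂ} (hc : ‖c‖ ≤ 1) : ‖1 - conj c * c‖ = 1 - ‖c‖ ^ 2 := by
  rw [conj_mul', ← ofReal_pow, ← ofReal_one, ← ofReal_sub, norm_real, Real.norm_of_nonneg]
  nlinarith [norm_nonneg c]

theorem norm_le_one_of_mapsTo {g : ℂ → ℂ} (hmaps : MapsTo g (ball 0 1) (closedBall 0 1))
    {z : ℂ} (hz : z ∈ ball (0 : ℂ) 1) : ‖g z‖ ≤ 1 :=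
  mem_closedBall_zero_iff.1 (hmaps hz)

theorem exists_eq_mul_mul_of_norm_le {N D : ℂ → ℂ} (hN : DifferentiableOn ℂ N (ball 0 1))
    (hD : DifferentiableOn ℂ D (ball 0 1)) (hD0 : ∀ z ∈ ball (0 : ℂ) 1, D z ≠ 0)
    (hle : ∀ z ∈ ball (0 : ℂ) 1, ‖N z‖ ≤ ‖D z‖) (hN0 : N 0 = 0) :
    ∃ G : ℂ → ℂ, DifferentiableOn ℂ G (ball 0 1) ∧ MapsTo G (ball 0 1) (closedBall 0 1) ∧
      ∀ z ∈ ball (0 : ℂ) 1, N z = z * (G z * D z) := by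
  set ω := fun z => N z / D z
  have hω : DifferentiableOn ℂ ω (ball 0 1) := hN.div hD hD0
  have hω0 : ω 0 = 0 := by simp [ω, hN0]
  have hmaps : MapsTo ω (ball 0 1) (closedBall (ω 0) 1) := fun z hz => by
    rw [hω0, mem_closedBall_zero_iff, norm_div]
    exact div_le_one_of_le₀ (hle z hz) (norm_nonneg _)
  refine ⟨dslope ω 0, (differentiableOn_dslope (ball_mem_nhds 0 one_pos)).2 hω,
    fun z hz => ?_, fun z hz => ?_⟩
  · simpa using Complex.norm_dslope_le_div_of_mapsTo_ball hω hmaps hz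
  · have h := sub_smul_dslope ω 0 z
    rw [sub_zero, smul_eq_mul, hω0, sub_zero] at h
    rw [← mul_assoc, h, div_mul_cancel₀ _ (hD0 z hz)]

theorem exists_eq_one_add_mul_of_re_pos {p : ℂ → ℂ} (hp : DifferentiableOn ℂ p (ball 0 1))
    (hp0 : p 0 = 1) (hre : ∀ z ∈ ball (0 : ℂ) 1, 0 < (p z).re) :
    ∃ g : ℂ → ℂ, DifferentiableOn ℂ g (ball 0 1) ∧ MapsTo g (ball 0 1) (closedBall 0 1) ∧
      ∀ z ∈ ball (0 : ℂ) 1, p z = 1 + z * (g z * (1 + p z)) := by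
  have hD0 : ∀ z ∈ ball (0 : ℂ) 1, 1 + p z ≠ 0 := fun z hz h => by
    have hre0 := congrArg re h
    simp only [add_re, one_re, zero_re] at hre0
    linarith [hre z hz]
  have hle : ∀ z ∈ ball (0 : ℂ) 1, ‖p z - 1‖ ≤ ‖1 + p z‖ := fun z hz => by
    have hsq : normSq (p z - 1) ≤ normSq (1 + p z) := by
      simp only [normSq_apply, sub_re, sub_im, add_re, add_im, one_re, one_im]
      nlinarith [hre z hz]
    rw [norm_def, norm_def]
    exact Real.sqrt_le_sqrt hsq
  obtain ⟨g, hg, hmaps, hfac⟩ := exists_eq_mul_mul_of_norm_le (hp.sub_const 1)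
    (hp.const_add 1) hD0 hle (by simp [hp0])
  exact ⟨g, hg, hmaps, fun z hz => by linear_combination hfac z hz⟩

theorem exists_eq_add_mul_of_norm_lt_one {g : ℂ → ℂ} (hg : DifferentiableOn ℂ g (ball 0 1))
    (hmaps : MapsTo g (ball 0 1) (closedBall 0 1)) (hg0 : ‖g 0‖ < 1) :
    ∃ G : ℂ → ℂ, DifferentiableOn ℂ G (ball 0 1) ∧ MapsTo G (ball 0 1) (closedBall 0 1) ∧
      ∀ z ∈ ball (0 : ℂ) 1, g z = g 0 + z * (G z * (1 - conj (g 0) * g z)) := by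
  have hD0 : ∀ z ∈ ball (0 : ℂ) 1, 1 - conj (g 0) * g z ≠ 0 := fun z hz h => by
    have h1 : ‖conj (g 0) * g z‖ < 1 := by
      rw [norm_mul, RCLike.norm_conj]
      nlinarith [norm_nonneg (g 0), norm_nonneg (g z), norm_le_one_of_mapsTo hmaps hz]
    rw [← sub_eq_zero.1 h, norm_one] at h1
    exact lt_irrefl _ h1
  obtain ⟨G, hG, hGmaps, hfac⟩ := exists_eq_mul_mul_of_norm_le (hg.sub_const (g 0))
    ((hg.const_mul (conj (g 0))).const_sub 1) hD0
    (fun z hz => norm_sub_le_norm_one_sub_conj_mul hg0.le (norm_le_one_of_mapsTo hmaps hz))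
    (sub_self _)
  exact ⟨G, hG, hGmaps, fun z hz => by linear_combination hfac z hz⟩

section BoundedFunction

variable {g : ℂ → ℂ} (hg : DifferentiableOn ℂ g (ball 0 1))
  (hmaps : MapsTo g (ball 0 1) (closedBall 0 1))
include hg hmaps

theorem iteratedDeriv_succ_eq_zero_of_norm_eq_one (hg0 : ‖g 0‖ = 1) (n : ℕ) :
    iteratedDeriv (n + 1) g 0 = 0 := by
  have hmax : IsLocalMax (norm ∘ g) 0 :=
    eventually_of_mem (ball_mem_nhds 0 one_pos) fun z hz => by
      simpa [hg0] using norm_le_one_of_mapsTo hmaps hz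
  have hconst := Complex.eventually_eq_of_isLocalMax_norm
    (eventually_of_mem (ball_mem_nhds 0 one_pos) fun z hz =>
      hg.differentiableAt (isOpen_ball.mem_nhds hz)) hmax
  rw [Filter.EventuallyEq.iteratedDeriv_eq (n + 1) hconst, iteratedDeriv_const]
  simp

theorem iteratedDeriv_one_two_of_norm_lt_one (hg0 : ‖g 0‖ < 1) :
    ∃ G : ℂ → ℂ, DifferentiableOn ℂ G (ball 0 1) ∧ MapsTo G (ball 0 1) (closedBall 0 1) ∧
      iteratedDeriv 1 g 0 = G 0 * (1 - conj (g 0) * g 0) ∧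
      iteratedDeriv 2 g 0 =
        2 * (1 - conj (g 0) * g 0) * (iteratedDeriv 1 G 0 - conj (g 0) * G 0 ^ 2) := by
  obtain ⟨G, hG, hGmaps, hfac⟩ := exists_eq_add_mul_of_norm_lt_one hg hmaps hg0
  have hfac' : g =ᶠ[𝓝 0] fun z => g 0 + z * (G z * (1 + -conj (g 0) * g z)) :=
    eventually_of_mem (ball_mem_nhds 0 one_pos) fun z hz => (hfac z hz).trans (by ring)
  obtain ⟨h1, h2, -⟩ := iteratedDeriv_one_two_three_of_eventuallyEq
    (hg.analyticAt (ball_mem_nhds 0 one_pos)) (hG.analyticAt (ball_mem_nhds 0 one_pos)) hfac'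
  refine ⟨G, hG, hGmaps, by rw [h1]; ring, by rw [h2, h1]; ring⟩

theorem norm_iteratedDeriv_one_le : ‖iteratedDeriv 1 g 0‖ ≤ 1 - ‖g 0‖ ^ 2 := by
  have hg0 : ‖g 0‖ ≤ 1 := norm_le_one_of_mapsTo hmaps (mem_ball_self one_pos)
  rcases hg0.lt_or_eq with hlt | heq
  · obtain ⟨G, -, hGmaps, h1, -⟩ := iteratedDeriv_one_two_of_norm_lt_one hg hmaps hlt
    have hG0 : ‖G 0‖ ≤ 1 := norm_le_one_of_mapsTo hGmaps (mem_ball_self one_pos)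
    rw [h1, norm_mul, norm_one_sub_conj_mul_self hg0]
    exact mul_le_of_le_one_left (by nlinarith [norm_nonneg (g 0)]) hG0
  · simp [iteratedDeriv_succ_eq_zero_of_norm_eq_one hg hmaps heq 0, heq]

theorem norm_iteratedDeriv_two_le : ‖iteratedDeriv 2 g 0‖ ≤ 2 * (1 - ‖g 0‖ ^ 2) := by
  have hg0 : ‖g 0‖ ≤ 1 := norm_le_one_of_mapsTo hmaps (mem_ball_self one_pos)
  rcases hg0.lt_or_eq with hlt | heq
  · obtain ⟨G, hG, hGmaps, -, h2⟩ := iteratedDeriv_one_two_of_norm_lt_one hg hmaps hlt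
    have hG1 := norm_iteratedDeriv_one_le hG hGmaps
    have hcoef : ‖iteratedDeriv 1 G 0 - conj (g 0) * G 0 ^ 2‖ ≤ 1 := calc
      _ ≤ ‖iteratedDeriv 1 G 0‖ + ‖g 0‖ * ‖G 0‖ ^ 2 := by
        rw [← Complex.norm_conj (g 0), ← norm_pow, ← norm_mul]
        exact norm_sub_le _ _
      _ ≤ (1 - ‖G 0‖ ^ 2) + 1 * ‖G 0‖ ^ 2 := by gcongr
      _ = 1 := by ring
    rw [h2, norm_mul, norm_mul, norm_one_sub_conj_mul_self hg0, RCLike.norm_two]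
    exact mul_le_of_le_one_right (by nlinarith [norm_nonneg (g 0)]) hcoef
  · simp [iteratedDeriv_succ_eq_zero_of_norm_eq_one hg hmaps heq 1, heq]

end BoundedFunction

theorem norm_sq_sub_sq_le_of_schwarz_bounds {c x y : ℂ} (hc : ‖c‖ ≤ 1)
    (hx : ‖x‖ ≤ 1 - ‖c‖ ^ 2) (hy : ‖y‖ ≤ 2 * (1 - ‖c‖ ^ 2)) :
    ‖(4 / 3 * c ^ 2 - 2 / 3 * x) ^ 2 - (-(1 / 4) * y + 7 / 3 * (c * x) - 13 / 6 * c ^ 3) ^ 2‖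
      ≤ 233 / 36 := by
  have ht := norm_nonneg c
  have h₃ : ‖4 / 3 * c ^ 2 - 2 / 3 * x‖ ≤ 4 / 3 := calc
    _ ≤ 4 / 3 * ‖c‖ ^ 2 + 2 / 3 * ‖x‖ := (norm_sub_le _ _).trans_eq (by norm_num [norm_mul])
    _ ≤ 4 / 3 := by nlinarith
  have h₄ : ‖-(1 / 4) * y + 7 / 3 * (c * x) - 13 / 6 * c ^ 3‖ ≤ 13 / 6 := calc
    _ ≤ 1 / 4 * ‖y‖ + 7 / 3 * (‖c‖ * ‖x‖) + 13 / 6 * ‖c‖ ^ 3 :=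
      (norm_sub_le_of_le (norm_add_le _ _) le_rfl).trans_eq (by norm_num [norm_mul])
    _ ≤ 13 / 6 := by
      have hcx : ‖c‖ * ‖x‖ ≤ ‖c‖ * (1 - ‖c‖ ^ 2) := mul_le_mul_of_nonneg_left hx ht
      nlinarith [mul_nonneg (sub_nonneg.2 hc) (by nlinarith : (0 : ℝ) ≤ 10 - 4 * ‖c‖ - ‖c‖ ^ 2)]
  calc _ ≤ ‖4 / 3 * c ^ 2 - 2 / 3 * x‖ ^ 2
        + ‖-(1 / 4) * y + 7 / 3 * (c * x) - 13 / 6 * c ^ 3‖ ^ 2 :=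
        (norm_sub_le _ _).trans_eq (by rw [norm_pow, norm_pow])
    _ ≤ (4 / 3) ^ 2 + (13 / 6) ^ 2 := by gcongr
    _ = 233 / 36 := by norm_num

theorem symToeplitz23_R_general (f : ℂ → ℂ)
    (hf : AnalyticOnNhd ℂ f (ball (0:ℂ) 1))
    (hf1 : deriv f 0 = 1)
    (hre : ∀ z ∈ ball (0:ℂ) 1, 0 < (deriv f z).re)
    (a₂ a₃ a₄ A₃ A₄ : ℂ)
    (ha₂ : a₂ = iteratedDeriv 2 f 0 / 2)
    (ha₃ : a₃ = iteratedDeriv 3 f 0 / 6)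
    (ha₄ : a₄ = iteratedDeriv 4 f 0 / 24)
    (hA₃ : A₃ = 2 * a₂ ^ 2 - a₃)
    (hA₄ : A₄ = -a₄ + 5 * a₂ * a₃ - 5 * a₂ ^ 3) :
    ‖A₃ ^ 2 - A₄ ^ 2‖ ≤ 233 / 36 := by
  have hp : DifferentiableOn ℂ (deriv f) (ball 0 1) := hf.deriv.differentiableOn
  obtain ⟨g, hg, hmaps, hfac⟩ := exists_eq_one_add_mul_of_re_pos hp hf1 hre
  have hfac' : deriv f =ᶠ[𝓝 0] fun z => 1 + z * (g z * (1 + 1 * deriv f z)) :=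
    eventually_of_mem (ball_mem_nhds 0 one_pos) fun z hz => (hfac z hz).trans (by ring)
  obtain ⟨hp₁, hp₂, hp₃⟩ := iteratedDeriv_one_two_three_of_eventuallyEq
    (hp.analyticAt (ball_mem_nhds 0 one_pos)) (hg.analyticAt (ball_mem_nhds 0 one_pos)) hfac'
  have hf_succ (n : ℕ) : iteratedDeriv (n + 1) f 0 = iteratedDeriv n (deriv f) 0 := by
    rw [iteratedDeriv_succ']
  rw [hf_succ 1] at ha₂
  rw [hf_succ 2] at ha₃
  rw [hf_succ 3] at ha₄
  have hA₃' : A₃ = 4 / 3 * g 0 ^ 2 - 2 / 3 * iteratedDeriv 1 g 0 := by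
    rw [hA₃, ha₂, ha₃, hp₂, hp₁, hf1]; ring
  have hA₄' : A₄ = -(1 / 4) * iteratedDeriv 2 g 0 + 7 / 3 * (g 0 * iteratedDeriv 1 g 0)
      - 13 / 6 * g 0 ^ 3 := by
    rw [hA₄, ha₂, ha₃, ha₄, hp₃, hp₂, hp₁, hf1]; ring
  rw [hA₃', hA₄']
  exact norm_sq_sub_sq_le_of_schwarz_bounds (norm_le_one_of_mapsTo hmaps (mem_ball_self one_pos))
    (norm_iteratedDeriv_one_le hg hmaps) (norm_iteratedDeriv_two_le hg hmaps)

theorem symToeplitz23_R (f : ℂ → ℂ)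
    (hf : AnalyticOnNhd ℂ f (ball (0:ℂ) 1))
    (hf0 : f 0 = 0) (hf1 : deriv f 0 = 1)
    (hre : ∀ z ∈ ball (0:ℂ) 1, 0 < (deriv f z).re)
    (a₂ a₃ a₄ A₂ A₃ A₄ : ℂ)
    (ha₂ : a₂ = iteratedDeriv 2 f 0 / 2)
    (ha₃ : a₃ = iteratedDeriv 3 f 0 / 6)
    (ha₄ : a₄ = iteratedDeriv 4 f 0 / 24)
    (hA₂ : A₂ = -a₂)
    (hA₃ : A₃ = 2 * a₂ ^ 2 - a₃)
    (hA₄ : A₄ = -a₄ + 5 * a₂ * a₃ - 5 * a₂ ^ 3) :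
    ‖A₃ ^ 2 - A₄ ^ 2‖ ≤ 233 / 36 :=
  symToeplitz23_R_general f hf hf1 hre a₂ a₃ a₄ A₃ A₄ ha₂ ha₃ ha₄ hA₃ hA₄
end

section
/- Let f be in the class R (bounded turning) and let A_2, A_3, A_4 be the coefficients of the inverse function. Then the symmetric Toeplitz determinant satisfies |T^s_{3,2}(f^{-1})| = |(A_2 - A_4)(A_2^2 - 2A_3^2 + A_2 A_4)| ≤ 817/108. -/
/-!
For `r < 1`, `Re f'(r e^{iθ}) dθ / 2π` is a probability measure on `(0, 2π]` (by `Re f' > 0` and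
the mean value property), and Cauchy's formula shows that its moments `∫ e^{-ikθ}` are
`r^k c_k / 2`, where `c_k = (k + 1) a_{k+1}` are the Taylor coefficients of `f'`. A random
variable `u` in the closed unit disc with mean `m` satisfies
`|E (u - m)²| ≤ E |u - m|² = E |u|² - |m|² ≤ 1 - |m|²` and `|E (u - m)³| ≤ (1 + |m|) E |u - m|²`.
Letting `r → 1`, this bounds `γ₁ = a₂` and the second and third central moments built from
`γ₂ = 3a₃/2` and `γ₃ = 2a₄`. Both factors of the determinant are polynomials in `γ₁` and these
central moments; the triangle inequality bounds them by polynomials in `|γ₁| ∈ [0, 1]` whose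
maxima, attained at `|γ₁| = 1`, are `19/6` and `43/18`, and `19/6 · 43/18 = 817/108`.
-/

open Complex Metric Set MeasureTheory Filter Topology
open scoped Nat ComplexConjugate

def MomentBounds (γ₁ γ₂ γ₃ : ℂ) : Prop :=
  ‖γ₂ - γ₁ ^ 2‖ ≤ 1 - ‖γ₁‖ ^ 2 ∧
    ‖γ₃ - 3 * γ₁ * γ₂ + 2 * γ₁ ^ 3‖ ≤ (1 + ‖γ₁‖) * (1 - ‖γ₁‖ ^ 2)

section Moments

variable {Ω : Type*} [MeasurableSpace Ω] {ν : Measure Ω} [IsProbabilityMeasure ν]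

theorem integral_norm_sub_integral_sq {F : Type*} [NormedAddCommGroup F] [InnerProductSpace ℝ F]
    [CompleteSpace F] {u : Ω → F} (hu : MemLp u 2 ν) :
    ∫ x, ‖u x - ∫ y, u y ∂ν‖ ^ 2 ∂ν = ∫ x, ‖u x‖ ^ 2 ∂ν - ‖∫ x, u x ∂ν‖ ^ 2 := by
  set m := ∫ y, u y ∂ν
  have hu1 : Integrable u ν := hu.integrable one_le_two
  have hu2 : Integrable (fun x => ‖u x‖ ^ 2) ν := hu.integrable_norm_pow two_ne_zero
  have hinner : Integrable (fun x => inner ℝ m (u x)) ν := hu1.const_inner m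
  simp_rw [norm_sub_sq_real, real_inner_comm m]
  rw [integral_add (hu2.sub' (hinner.const_mul 2)) (integrable_const _),
    integral_sub hu2 (hinner.const_mul 2), integral_const_mul, integral_inner hu1, integral_const]
  simp only [inner_self_eq_norm_sq_to_K, Real.ringHom_apply, probReal_univ, smul_eq_mul, one_mul, m]
  ring

variable {u : Ω → ℂ}

theorem integrable_pow_of_norm_le_one (hu : AEStronglyMeasurable u ν)
    (hu1 : ∀ᵐ x ∂ν, ‖u x‖ ≤ 1) (k : ℕ) : Integrable (fun x => u x ^ k) ν :=
  .of_bound (hu.pow k) 1 <| hu1.mono fun x hx => by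
    simpa using pow_le_one₀ (norm_nonneg _) hx

theorem integral_sub_integral_sq (h₁ : Integrable u ν) (h₂ : Integrable (fun x => u x ^ 2) ν) :
    ∫ x, (u x - ∫ y, u y ∂ν) ^ 2 ∂ν = ∫ x, u x ^ 2 ∂ν - (∫ x, u x ∂ν) ^ 2 := by
  set m := ∫ y, u y ∂ν
  have hexpand : ∀ x, (u x - m) ^ 2 = u x ^ 2 - 2 * m * u x + m ^ 2 := fun x => by ring
  simp_rw [hexpand]
  rw [integral_add (h₂.sub' (h₁.const_mul _)) (integrable_const _),
    integral_sub h₂ (h₁.const_mul _), integral_const_mul, integral_const]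
  simp only [probReal_univ, one_smul, m]
  ring

theorem integral_sub_integral_cube (h₁ : Integrable u ν) (h₂ : Integrable (fun x => u x ^ 2) ν)
    (h₃ : Integrable (fun x => u x ^ 3) ν) :
    ∫ x, (u x - ∫ y, u y ∂ν) ^ 3 ∂ν = ∫ x, u x ^ 3 ∂ν
      - 3 * (∫ x, u x ∂ν) * ∫ x, u x ^ 2 ∂ν + 2 * (∫ x, u x ∂ν) ^ 3 := by
  set m := ∫ y, u y ∂ν
  have hexpand : ∀ x, (u x - m) ^ 3 = u x ^ 3 - 3 * m * u x ^ 2 + 3 * m ^ 2 * u x - m ^ 3 :=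
    fun x => by ring
  simp_rw [hexpand]
  rw [integral_sub ((h₃.sub' (h₂.const_mul _)).fun_add (h₁.const_mul _)) (integrable_const _),
    integral_add (h₃.sub' (h₂.const_mul _)) (h₁.const_mul _),
    integral_sub h₃ (h₂.const_mul _), integral_const_mul, integral_const_mul, integral_const]
  simp only [probReal_univ, one_smul, m]
  ring

theorem momentBounds_integral_pow (hu : AEStronglyMeasurable u ν) (hu1 : ∀ᵐ x ∂ν, ‖u x‖ ≤ 1) :
    MomentBounds (∫ x, u x ∂ν) (∫ x, u x ^ 2 ∂ν) (∫ x, u x ^ 3 ∂ν) := by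
  set m := ∫ x, u x ∂ν
  have hint := integrable_pow_of_norm_le_one hu hu1
  have h₁ : Integrable u ν := by simpa using hint 1
  have hL2 : MemLp u 2 ν := .of_bound hu 1 hu1
  have hvar : ∫ x, ‖u x - m‖ ^ 2 ∂ν ≤ 1 - ‖m‖ ^ 2 := by
    have hsq : ∫ x, ‖u x‖ ^ 2 ∂ν ≤ 1 := by
      simpa using integral_mono_ae (hL2.integrable_norm_pow two_ne_zero) (integrable_const 1)
        (hu1.mono fun x hx => pow_le_one₀ (norm_nonneg _) hx)
    linarith [integral_norm_sub_integral_sq hL2]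
  constructor
  · rw [← integral_sub_integral_sq h₁ (hint 2)]
    calc _ ≤ ∫ x, ‖(u x - m) ^ 2‖ ∂ν := norm_integral_le_integral_norm _
      _ = ∫ x, ‖u x - m‖ ^ 2 ∂ν := by simp only [norm_pow]
      _ ≤ _ := hvar
  · rw [← integral_sub_integral_cube h₁ (hint 2) (hint 3)]
    calc _ ≤ ∫ x, ‖(u x - m) ^ 3‖ ∂ν := norm_integral_le_integral_norm _
      _ ≤ ∫ x, (1 + ‖m‖) * ‖u x - m‖ ^ 2 ∂ν := by
          refine integral_mono_of_nonneg (ae_of_all _ fun x => norm_nonneg _)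
            (((hL2.sub (memLp_const m)).integrable_norm_pow two_ne_zero).const_mul _) ?_
          filter_upwards [hu1] with x hx
          have hdist : ‖u x - m‖ ≤ 1 + ‖m‖ := (norm_sub_le _ _).trans (by linarith)
          calc ‖(u x - m) ^ 3‖ = ‖u x - m‖ * ‖u x - m‖ ^ 2 := by rw [norm_pow]; ring
            _ ≤ (1 + ‖m‖) * ‖u x - m‖ ^ 2 := by gcongr
      _ ≤ _ := by
          rw [integral_const_mul]
          exact mul_le_mul_of_nonneg_left hvar (by positivity)

end Moments

theorem MomentBounds.of_forall_lt_one {γ₁ γ₂ γ₃ : ℂ}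
    (h : ∀ r ∈ Ioo (0 : ℝ) 1, MomentBounds (r * γ₁) (r ^ 2 * γ₂) (r ^ 3 * γ₃)) :
    MomentBounds γ₁ γ₂ γ₃ := by
  have hclosed : IsClosed {γ : ℂ × ℂ × ℂ | MomentBounds γ.1 γ.2.1 γ.2.2} := by
    simp only [MomentBounds, ofPred_and]
    refine (isClosed_le ?_ ?_).inter (isClosed_le ?_ ?_) <;> fun_prop
  have hlim : Tendsto (fun r : ℝ => ((r : ℂ) * γ₁, (r : ℂ) ^ 2 * γ₂, (r : ℂ) ^ 3 * γ₃))
      (𝓝[<] 1) (𝓝 (γ₁, γ₂, γ₃)) := by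
    have hcont : Continuous fun r : ℝ => ((r : ℂ) * γ₁, (r : ℂ) ^ 2 * γ₂, (r : ℂ) ^ 3 * γ₃) := by
      fun_prop
    simpa using (hcont.tendsto 1).mono_left nhdsWithin_le_nhds
  exact hclosed.mem_of_tendsto hlim <|
    eventually_of_mem (Ioo_mem_nhdsLT zero_lt_one) h

theorem intervalIntegral_mul_re {f g : ℝ → ℂ} {a b : ℝ} (hf : Continuous f) (hg : Continuous g) :
    ∫ x in a..b, g x * (f x).re
      = ((∫ x in a..b, g x * f x) + conj (∫ x in a..b, conj (g x) * f x)) / 2 := by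
  have hpt : ∀ x, g x * (f x).re = (g x * f x + conj (conj (g x) * f x)) / 2 := fun x => by
    rw [map_mul, conj_conj, ← mul_add, add_conj]
    push_cast
    ring
  simp_rw [hpt]
  rw [intervalIntegral.integral_div, intervalIntegral.integral_add,
    intervalIntegral.intervalIntegral_conj]
  all_goals exact Continuous.intervalIntegrable (by fun_prop) _ _

noncomputable def taylorCoeff (p : ℂ → ℂ) (k : ℕ) : ℂ := iteratedDeriv k p 0 / k !

noncomputable def circleReMeasure (p : ℂ → ℂ) (r : ℝ) : Measure ℝ :=
  (volume.restrict (Ioc 0 (2 * Real.pi))).withDensity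
    fun θ => ENNReal.ofReal ((p (circleMap 0 r θ)).re / (2 * Real.pi))

section CircleMoments

open Real

variable {p : ℂ → ℂ} {r : ℝ}

theorem ContinuousOn.continuous_circleMap_comp (hp : ContinuousOn p (closedBall 0 r)) (hr : 0 ≤ r) :
    Continuous fun θ => p (circleMap 0 r θ) :=
  hp.comp_continuous (continuous_circleMap 0 r)
    fun θ => sphere_subset_closedBall (circleMap_mem_sphere 0 hr θ)

theorem integral_exp_neg_pow_mul_circleMap (hp : DifferentiableOn ℂ p (closedBall 0 r))
    (hr : 0 < r) (k : ℕ) :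
    ∫ θ in 0..2 * π, exp (-(θ * I)) ^ k * p (circleMap 0 r θ)
      = 2 * π * r ^ k * taylorCoeff p k := by
  have h := hp.circleIntegral_one_div_sub_center_pow_smul hr k
  have hr' : (r : ℂ) ≠ 0 := by exact_mod_cast hr.ne'
  have hpt : ∀ θ : ℝ, deriv (circleMap 0 r) θ • (1 / (circleMap 0 r θ - 0) ^ (k + 1))
      • p (circleMap 0 r θ) = (I / r ^ k) * (exp (-(θ * I)) ^ k * p (circleMap 0 r θ)) := by
    intro θ
    rw [deriv_circleMap, circleMap_zero, Complex.exp_neg, inv_pow, smul_eq_mul, smul_eq_mul,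
      sub_zero]
    field_simp
    ring
  simp only [circleIntegral, hpt, intervalIntegral.integral_const_mul] at h
  rw [smul_eq_mul] at h
  rw [taylorCoeff]
  field_simp at h ⊢
  linear_combination h

theorem integral_exp_pow_mul_circleMap (hp : DifferentiableOn ℂ p (closedBall 0 r))
    (hr : 0 < r) (k : ℕ) :
    ∫ θ in 0..2 * π, exp (θ * I) ^ (k + 1) * p (circleMap 0 r θ) = 0 := by
  have h : ∮ z in C(0, r), z ^ k * p z = 0 :=
    ((differentiable_pow k).differentiableOn.mul hp).diffContOnCl_ball subset_rfl
      |>.circleIntegral_eq_zero hr.le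
  have hpt : ∀ θ : ℝ, deriv (circleMap 0 r) θ • (circleMap 0 r θ ^ k * p (circleMap 0 r θ))
      = (I * r ^ (k + 1)) * (exp (θ * I) ^ (k + 1) * p (circleMap 0 r θ)) := by
    intro θ
    rw [deriv_circleMap, circleMap_zero, smul_eq_mul]
    ring
  simp only [circleIntegral, hpt, intervalIntegral.integral_const_mul] at h
  have hr' : (r : ℂ) ≠ 0 := by exact_mod_cast hr.ne'
  simpa [I_ne_zero, hr'] using h

theorem integral_circleReMeasure (hc : Continuous fun θ => p (circleMap 0 r θ))
    (hre : ∀ θ, 0 ≤ (p (circleMap 0 r θ)).re) (g : ℝ → ℂ) :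
    ∫ θ, g θ ∂circleReMeasure p r
      = (2 * π)⁻¹ * ∫ θ in 0..2 * π, g θ * (p (circleMap 0 r θ)).re := by
  rw [circleReMeasure, integral_withDensity_eq_integral_toReal_smul,
    intervalIntegral.integral_of_le (by positivity), ← integral_const_mul]
  · congr 1 with θ
    rw [ENNReal.toReal_ofReal (by have := hre θ; positivity), Complex.real_smul]
    push_cast
    ring
  · exact ENNReal.measurable_ofReal.comp ((continuous_re.comp hc).measurable.div_const _)
  · exact ae_of_all _ fun _ => ENNReal.ofReal_lt_top

theorem isProbabilityMeasure_circleReMeasure (hp : DifferentiableOn ℂ p (closedBall 0 r))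
    (hr : 0 < r) (hre : ∀ θ, 0 ≤ (p (circleMap 0 r θ)).re) (hp0 : (p 0).re = 1) :
    IsProbabilityMeasure (circleReMeasure p r) := by
  have hc := hp.continuousOn.continuous_circleMap_comp hr.le
  have h := integral_circleReMeasure hc hre fun _ => 1
  have h0 := integral_exp_neg_pow_mul_circleMap hp hr 0
  simp only [pow_zero, one_mul, taylorCoeff, Nat.factorial_zero, Nat.cast_one, div_one,
    iteratedDeriv_zero] at h0
  rw [intervalIntegral_mul_re hc continuous_const] at h
  simp only [map_one, one_mul, h0, integral_const, mul_one, map_mul, map_ofNat, conj_ofReal,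
    Complex.real_smul] at h
  rw [← mul_add, add_conj, hp0] at h
  have hmass : ((circleReMeasure p r).real univ : ℂ) = 1 := by
    rw [h]
    push_cast
    field_simp
  exact ⟨(ENNReal.toReal_eq_one_iff _).mp (by exact_mod_cast hmass)⟩

theorem integral_exp_neg_pow_circleReMeasure (hp : DifferentiableOn ℂ p (closedBall 0 r))
    (hr : 0 < r) (hre : ∀ θ, 0 ≤ (p (circleMap 0 r θ)).re) (k : ℕ) :
    ∫ θ, exp (-(θ * I)) ^ (k + 1) ∂circleReMeasure p r
      = r ^ (k + 1) * (taylorCoeff p (k + 1) / 2) := by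
  have hc := hp.continuousOn.continuous_circleMap_comp hr.le
  have hconj : ∀ θ : ℝ, conj (exp (-(θ * I)) ^ (k + 1)) = exp (θ * I) ^ (k + 1) := fun θ => by
    rw [map_pow, ← exp_conj]
    simp
  rw [integral_circleReMeasure hc hre, intervalIntegral_mul_re hc (by fun_prop)]
  simp only [hconj, integral_exp_neg_pow_mul_circleMap hp hr, integral_exp_pow_mul_circleMap hp hr,
    map_zero, add_zero]
  push_cast
  field_simp

end CircleMoments

theorem momentBounds_taylorCoeff {p : ℂ → ℂ} (hp : DifferentiableOn ℂ p (ball 0 1))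
    (hp0 : (p 0).re = 1) (hre : ∀ z ∈ ball (0 : ℂ) 1, 0 ≤ (p z).re) :
    MomentBounds (taylorCoeff p 1 / 2) (taylorCoeff p 2 / 2) (taylorCoeff p 3 / 2) := by
  refine .of_forall_lt_one fun r ⟨hr0, hr1⟩ => ?_
  have hsub : closedBall (0 : ℂ) r ⊆ ball 0 1 := closedBall_subset_ball hr1
  have hp' := hp.mono hsub
  have hre' : ∀ θ, 0 ≤ (p (circleMap 0 r θ)).re := fun θ =>
    hre _ (hsub (sphere_subset_closedBall (circleMap_mem_sphere 0 hr0.le θ)))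
  have := isProbabilityMeasure_circleReMeasure hp' hr0 hre' hp0
  have h := momentBounds_integral_pow (ν := circleReMeasure p r) (u := fun θ => exp (-(θ * I)))
    (by fun_prop) (ae_of_all _ fun θ => by simp [Complex.norm_exp])
  have h₁ := integral_exp_neg_pow_circleReMeasure hp' hr0 hre' 0
  simp only [zero_add, pow_one] at h₁
  rwa [h₁, integral_exp_neg_pow_circleReMeasure hp' hr0 hre' 1,
    integral_exp_neg_pow_circleReMeasure hp' hr0 hre' 2] at h

section CentralBounds

variable {γ d₂ d₃ : ℂ}

theorem norm_symToeplitz_fst_factor_le (hd₂ : ‖d₂‖ ≤ 1 - ‖γ‖ ^ 2)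
    (hd₃ : ‖d₃‖ ≤ (1 + ‖γ‖) * (1 - ‖γ‖ ^ 2)) :
    ‖-γ + 13 / 6 * γ ^ 3 + d₃ / 2 - 11 / 6 * γ * d₂‖ ≤ 19 / 6 := by
  have htri : ‖-γ + 13 / 6 * γ ^ 3 + d₃ / 2 - 11 / 6 * γ * d₂‖
      ≤ ‖γ‖ + 13 / 6 * ‖γ‖ ^ 3 + ‖d₃‖ / 2 + 11 / 6 * (‖γ‖ * ‖d₂‖) := by
    calc _ ≤ ‖-γ + 13 / 6 * γ ^ 3 + d₃ / 2‖ + ‖11 / 6 * γ * d₂‖ := norm_sub_le _ _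
      _ ≤ ‖-γ‖ + ‖13 / 6 * γ ^ 3‖ + ‖d₃ / 2‖ + ‖11 / 6 * γ * d₂‖ := by
          gcongr; exact norm_add₃_le
      _ = _ := by simp; ring
  have hs := norm_nonneg γ
  have hγ : ‖γ‖ ≤ 1 := by nlinarith [norm_nonneg d₂]
  nlinarith [mul_le_mul_of_nonneg_left hd₂ hs, mul_nonneg hs (sq_nonneg (1 - ‖γ‖))]

theorem norm_symToeplitz_snd_factor_le (hd₂ : ‖d₂‖ ≤ 1 - ‖γ‖ ^ 2)
    (hd₃ : ‖d₃‖ ≤ (1 + ‖γ‖) * (1 - ‖γ‖ ^ 2)) :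
    ‖γ ^ 2 - 25 / 18 * γ ^ 4 + 31 / 18 * γ ^ 2 * d₂ - 8 / 9 * d₂ ^ 2 + γ * d₃ / 2‖ ≤ 43 / 18 := by
  have htri : ‖γ ^ 2 - 25 / 18 * γ ^ 4 + 31 / 18 * γ ^ 2 * d₂ - 8 / 9 * d₂ ^ 2 + γ * d₃ / 2‖
      ≤ ‖γ‖ ^ 2 + 25 / 18 * ‖γ‖ ^ 4 + 31 / 18 * (‖γ‖ ^ 2 * ‖d₂‖) + 8 / 9 * ‖d₂‖ ^ 2
        + ‖γ‖ * ‖d₃‖ / 2 := by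
    calc _ ≤ ‖γ ^ 2 - 25 / 18 * γ ^ 4 + 31 / 18 * γ ^ 2 * d₂ - 8 / 9 * d₂ ^ 2‖ + ‖γ * d₃ / 2‖ :=
          norm_add_le _ _
      _ ≤ ‖γ ^ 2 - 25 / 18 * γ ^ 4 + 31 / 18 * γ ^ 2 * d₂‖ + ‖8 / 9 * d₂ ^ 2‖ + ‖γ * d₃ / 2‖ := by
          gcongr; exact norm_sub_le _ _
      _ ≤ ‖γ ^ 2‖ + ‖25 / 18 * γ ^ 4‖ + ‖31 / 18 * γ ^ 2 * d₂‖ + ‖8 / 9 * d₂ ^ 2‖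
          + ‖γ * d₃ / 2‖ := by
          gcongr; exact (norm_add_le _ _).trans (by gcongr; exact norm_sub_le _ _)
      _ = _ := by simp; ring
  have hs := norm_nonneg γ
  have hγ : ‖γ‖ ≤ 1 := by nlinarith [norm_nonneg d₂]
  nlinarith [mul_le_mul_of_nonneg_left hd₂ (sq_nonneg ‖γ‖), mul_le_mul_of_nonneg_left hd₃ hs,
    pow_le_pow_left₀ (norm_nonneg d₂) hd₂ 2, mul_nonneg (mul_nonneg hs hs) (sq_nonneg (1 - ‖γ‖))]

end CentralBounds

theorem MomentBounds.norm_symToeplitz_le {a₂ a₃ a₄ : ℂ}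
    (h : MomentBounds a₂ (3 / 2 * a₃) (2 * a₄)) :
    ‖(-a₂ - (-a₄ + 5 * a₂ * a₃ - 5 * a₂ ^ 3)) * ((-a₂) ^ 2 - 2 * (2 * a₂ ^ 2 - a₃) ^ 2
      + -a₂ * (-a₄ + 5 * a₂ * a₃ - 5 * a₂ ^ 3))‖ ≤ 817 / 108 := by
  obtain ⟨h₂, h₃⟩ := h
  set d₂ := 3 / 2 * a₃ - a₂ ^ 2
  set d₃ := 2 * a₄ - 3 * a₂ * (3 / 2 * a₃) + 2 * a₂ ^ 3
  have e₁ : -a₂ - (-a₄ + 5 * a₂ * a₃ - 5 * a₂ ^ 3)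
      = -a₂ + 13 / 6 * a₂ ^ 3 + d₃ / 2 - 11 / 6 * a₂ * d₂ := by ring
  have e₂ : (-a₂) ^ 2 - 2 * (2 * a₂ ^ 2 - a₃) ^ 2 + -a₂ * (-a₄ + 5 * a₂ * a₃ - 5 * a₂ ^ 3)
      = a₂ ^ 2 - 25 / 18 * a₂ ^ 4 + 31 / 18 * a₂ ^ 2 * d₂ - 8 / 9 * d₂ ^ 2 + a₂ * d₃ / 2 := by
    ring
  rw [norm_mul, e₁, e₂]
  calc _ ≤ 19 / 6 * (43 / 18) :=
        mul_le_mul (norm_symToeplitz_fst_factor_le h₂ h₃) (norm_symToeplitz_snd_factor_le h₂ h₃)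
          (norm_nonneg _) (by norm_num)
    _ = 817 / 108 := by norm_num

theorem symToeplitz32_R_general (f : ℂ → ℂ)
    (hf : AnalyticOnNhd ℂ f (ball (0:ℂ) 1))
    (hf1 : deriv f 0 = 1)
    (hre : ∀ z ∈ ball (0:ℂ) 1, 0 < (deriv f z).re)
    (a₂ a₃ a₄ A₂ A₃ A₄ : ℂ)
    (ha₂ : a₂ = iteratedDeriv 2 f 0 / 2)
    (ha₃ : a₃ = iteratedDeriv 3 f 0 / 6)
    (ha₄ : a₄ = iteratedDeriv 4 f 0 / 24)
    (hA₂ : A₂ = -a₂)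
    (hA₃ : A₃ = 2 * a₂ ^ 2 - a₃)
    (hA₄ : A₄ = -a₄ + 5 * a₂ * a₃ - 5 * a₂ ^ 3) :
    ‖(A₂ - A₄) * (A₂ ^ 2 - 2 * A₃ ^ 2 + A₂ * A₄)‖ ≤ 817 / 108 := by
  have hcoeff (k : ℕ) : taylorCoeff (deriv f) k = iteratedDeriv (k + 1) f 0 / k ! := by
    rw [taylorCoeff, iteratedDeriv_succ']
  have h := momentBounds_taylorCoeff hf.deriv.differentiableOn (by simp [hf1])
    fun z hz => (hre z hz).le
  have hγ : MomentBounds a₂ (3 / 2 * a₃) (2 * a₄) := by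
    convert h using 2 <;> simp only [hcoeff, ha₂, ha₃, ha₄, Nat.factorial] <;> push_cast <;> ring
  subst hA₂ hA₃ hA₄
  exact hγ.norm_symToeplitz_le

theorem symToeplitz32_R (f : ℂ → ℂ)
    (hf : AnalyticOnNhd ℂ f (ball (0:ℂ) 1))
    (hf0 : f 0 = 0) (hf1 : deriv f 0 = 1)
    (hre : ∀ z ∈ ball (0:ℂ) 1, 0 < (deriv f z).re)
    (a₂ a₃ a₄ A₂ A₃ A₄ : ℂ)
    (ha₂ : a₂ = iteratedDeriv 2 f 0 / 2)
    (ha₃ : a₃ = iteratedDeriv 3 f 0 / 6)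
    (ha₄ : a₄ = iteratedDeriv 4 f 0 / 24)
    (hA₂ : A₂ = -a₂)
    (hA₃ : A₃ = 2 * a₂ ^ 2 - a₃)
    (hA₄ : A₄ = -a₄ + 5 * a₂ * a₃ - 5 * a₂ ^ 3) :
    ‖(A₂ - A₄) * (A₂ ^ 2 - 2 * A₃ ^ 2 + A₂ * A₄)‖ ≤ 817 / 108 :=
  symToeplitz32_R_general f hf hf1 hre a₂ a₃ a₄ A₂ A₃ A₄ ha₂ ha₃ ha₄ hA₂ hA₃ hA₄
end

section
/- Let f be a convex function (class C) and let A_2, A_3 be the coefficients of the inverse function. Then the symmetric Toeplitz determinant satisfies |T^s_{2,2}(f^{-1})| = |A_2^2 - A_3^2| ≤ 2. -/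
open Complex Metric Set
open scoped ComplexConjugate

/-!
For convex `f` the function `p = 1 + z f''/f'` has positive real part, so
`ω = (p - 1) / (p + 1) = z f'' / (2 f' + z f'')` maps the disk into itself and vanishes at `0`.
By Schwarz's lemma `g = ω / z` maps the disk into the closed disk, and `g 0 = a₂`,
`g' 0 = 3 (a₃ - a₂²)`. The Schwarz–Pick inequality `|g'(0)| ≤ 1 - |g(0)|²`, proved by composing `g`
with the disk automorphism moving `g 0` to `0`, gives `3 |a₃ - a₂²| ≤ 1 - |a₂|²`. Writing
`A₃ = a₂² - (a₃ - a₂²)`, this yields `|A₂² - A₃²| ≤ t² + ((1 + 2t²)/3)² ≤ 2` with `t = |a₂| ≤ 1`.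
-/

namespace Complex

theorem normSq_one_sub_conj_mul_sub_normSq_sub (b w : ℂ) :
    normSq (1 - conj b * w) - normSq (w - b) = (1 - normSq b) * (1 - normSq w) := by
  apply ofReal_injective
  push_cast
  simp only [← mul_conj, map_sub, map_mul, map_one, conj_conj]
  ring

theorem norm_sub_le_norm_one_sub_conj_mul {b w : ℂ} (hb : ‖b‖ ≤ 1) (hw : ‖w‖ ≤ 1) :
    ‖w - b‖ ≤ ‖1 - conj b * w‖ := by
  have key := normSq_one_sub_conj_mul_sub_normSq_sub b w
  simp only [normSq_eq_norm_sq] at key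
  rw [← sq_le_sq₀ (norm_nonneg _) (norm_nonneg _)]
  nlinarith [mul_nonneg (sub_nonneg.2 (pow_le_one₀ (n := 2) (norm_nonneg b) hb))
    (sub_nonneg.2 (pow_le_one₀ (n := 2) (norm_nonneg w) hw))]

theorem one_sub_conj_mul_ne_zero {b w : ℂ} (hb : ‖b‖ < 1) (hw : ‖w‖ ≤ 1) :
    1 - conj b * w ≠ 0 := by
  refine sub_ne_zero.2 fun h => ?_
  have : ‖conj b * w‖ < 1 := by
    rw [norm_mul, norm_conj]
    exact (mul_le_of_le_one_right (norm_nonneg b) hw).trans_lt hb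
  simp [← h] at this

theorem mapsTo_moebius_comp {s : Set ℂ} {g : ℂ → ℂ} {b : ℂ} (hb : ‖b‖ < 1)
    (hg : MapsTo g s (closedBall 0 1)) :
    MapsTo (fun z => (g z - b) / (1 - conj b * g z)) s (closedBall 0 1) := by
  intro z hz
  have hgz : ‖g z‖ ≤ 1 := mem_closedBall_zero_iff.1 (hg hz)
  rw [mem_closedBall_zero_iff, norm_div]
  exact div_le_one_of_le₀ (norm_sub_le_norm_one_sub_conj_mul hb.le hgz) (norm_nonneg _)

theorem norm_lt_norm_two_add {w : ℂ} (h : 0 < (1 + w).re) : ‖w‖ < ‖2 + w‖ := by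
  rw [← sq_lt_sq₀ (norm_nonneg _) (norm_nonneg _), Complex.sq_norm, Complex.sq_norm,
    normSq_apply, normSq_apply]
  simp only [add_re, one_re, add_im, re_ofNat, im_ofNat] at h ⊢
  nlinarith

theorem norm_lt_norm_two_mul_add {a c : ℂ} (ha : a ≠ 0) (h : 0 < (1 + c / a).re) :
    ‖c‖ < ‖2 * a + c‖ := by
  have hc : c = a * (c / a) := (mul_div_cancel₀ c ha).symm
  have h2 : 2 * a + c = a * (2 + c / a) := by rw [mul_add, ← hc]; ring
  rw [h2, hc, norm_mul, norm_mul, ← hc]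
  exact mul_lt_mul_of_pos_left (norm_lt_norm_two_add h) (norm_pos_iff.2 ha)

theorem norm_deriv_zero_le_one_sub_sq_norm {g : ℂ → ℂ} (hd : DifferentiableOn ℂ g (ball 0 1))
    (hg : MapsTo g (ball 0 1) (closedBall 0 1)) : ‖deriv g 0‖ ≤ 1 - ‖g 0‖ ^ 2 := by
  have h0 : ball (0 : ℂ) 1 ∈ nhds 0 := isOpen_ball.mem_nhds (mem_ball_self one_pos)
  rcases (mem_closedBall_zero_iff.1 (hg (mem_of_mem_nhds h0))).eq_or_lt with hb | hb
  · have hmax : IsLocalMax (norm ∘ g) 0 := Filter.eventually_of_mem h0 fun z hz =>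
      (mem_closedBall_zero_iff.1 (hg hz)).trans hb.ge
    have hconst : g =ᶠ[nhds 0] fun _ => g 0 :=
      eventually_eq_of_isLocalMax_norm (hd.eventually_differentiableAt h0) hmax
    rw [hconst.deriv_eq, deriv_const, hb]
    norm_num
  set b := g 0
  set h : ℂ → ℂ := fun z => (g z - b) / (1 - conj b * g z)
  have hpos : 0 < 1 - ‖b‖ ^ 2 := by nlinarith [norm_nonneg b]
  have hden : ∀ z ∈ ball (0 : ℂ) 1, 1 - conj b * g z ≠ 0 := fun z hz =>
    one_sub_conj_mul_ne_zero hb (mem_closedBall_zero_iff.1 (hg hz))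
  have hhd : DifferentiableOn ℂ h (ball 0 1) :=
    (hd.sub_const b).div ((differentiableOn_const _).sub (hd.const_mul _)) hden
  have hmaps : MapsTo h (ball 0 1) (closedBall (h 0) 1) := by
    simpa [h, b] using mapsTo_moebius_comp hb hg
  have hderiv : HasDerivAt h (deriv g 0 / ((1 - ‖b‖ ^ 2 : ℝ) : ℂ)) 0 := by
    have hg0 := (hd.differentiableAt h0).hasDerivAt
    have hb' : 1 - conj b * b = ((1 - ‖b‖ ^ 2 : ℝ) : ℂ) := by
      rw [mul_comm, mul_conj, normSq_eq_norm_sq]; push_cast; ring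
    refine ((hg0.sub_const b).div ((hg0.const_mul (conj b)).const_sub 1)
      (hden 0 (mem_of_mem_nhds h0))).congr_deriv ?_
    have hne : ((1 - ‖b‖ ^ 2 : ℝ) : ℂ) ≠ 0 := by exact_mod_cast hpos.ne'
    rw [hb', sub_self, zero_mul, sub_zero]
    field_simp
  have hschwarz := norm_deriv_le_one_of_mapsTo_ball hhd hmaps one_pos
  rwa [hderiv.deriv, norm_div, norm_real, Real.norm_of_nonneg hpos.le, div_le_one hpos]
    at hschwarz

theorem mapsTo_closedBall_of_mapsTo_mul {g : ℂ → ℂ} (hd : DifferentiableOn ℂ g (ball 0 1))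
    (hg : MapsTo (fun z => z * g z) (ball 0 1) (ball 0 1)) :
    MapsTo g (ball 0 1) (closedBall 0 1) := by
  intro z hz
  have hmaps : MapsTo (fun z => z * g z) (ball 0 1) (closedBall (0 * g 0) 1) := by
    simpa using hg.mono_right ball_subset_closedBall
  have hd' : DifferentiableOn ℂ (fun z => z * g z) (ball 0 1) := by fun_prop
  have hslope := norm_dslope_le_div_of_mapsTo_ball hd' hmaps hz
  rw [div_one] at hslope
  refine mem_closedBall_zero_iff.2 ?_
  rcases eq_or_ne z 0 with rfl | hz0
  · have hderiv : HasDerivAt (fun z => z * g z) (g 0) 0 := by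
      refine ((hasDerivAt_id' 0).mul
        (hd.differentiableAt (isOpen_ball.mem_nhds hz)).hasDerivAt).congr_deriv ?_
      simp
    rwa [dslope_same, hderiv.deriv] at hslope
  · rwa [dslope_of_ne _ hz0, slope_def_field, zero_mul, sub_zero, sub_zero,
      mul_div_cancel_left₀ _ hz0] at hslope

end Complex

theorem AnalyticOnNhd.iteratedDeriv {s : Set ℂ} {f : ℂ → ℂ} (hf : AnalyticOnNhd ℂ f s)
    (n : ℕ) : AnalyticOnNhd ℂ (iteratedDeriv n f) s := by
  rw [iteratedDeriv_eq_iterate]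
  exact hf.iterated_deriv n

/-- For `p z = 1 + z f''(z) / f'(z)`, the function `z * schwarzQuotient f z` is `(p - 1) / (p + 1)`,
the Schwarz function associated with the Carathéodory function `p`. -/
noncomputable def schwarzQuotient (f : ℂ → ℂ) (z : ℂ) : ℂ :=
  iteratedDeriv 2 f z / (2 * deriv f z + z * iteratedDeriv 2 f z)

section Convex

variable {f : ℂ → ℂ}

theorem norm_mul_iteratedDeriv_two_lt (hne : ∀ z ∈ ball (0 : ℂ) 1, deriv f z ≠ 0)
    (hcv : ∀ z ∈ ball (0 : ℂ) 1, 0 < (1 + z * iteratedDeriv 2 f z / deriv f z).re)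
    {z : ℂ} (hz : z ∈ ball (0 : ℂ) 1) :
    ‖z * iteratedDeriv 2 f z‖ < ‖2 * deriv f z + z * iteratedDeriv 2 f z‖ :=
  norm_lt_norm_two_mul_add (hne z hz) (hcv z hz)

theorem differentiableOn_schwarzQuotient (hf : AnalyticOnNhd ℂ f (ball 0 1))
    (hne : ∀ z ∈ ball (0 : ℂ) 1, deriv f z ≠ 0)
    (hcv : ∀ z ∈ ball (0 : ℂ) 1, 0 < (1 + z * iteratedDeriv 2 f z / deriv f z).re) :
    DifferentiableOn ℂ (schwarzQuotient f) (ball 0 1) := by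
  have hf₁ := hf.deriv.differentiableOn
  have hf₂ := (hf.iteratedDeriv 2).differentiableOn
  refine hf₂.div (d := fun z => 2 * deriv f z + z * iteratedDeriv 2 f z) (by fun_prop)
    fun z hz h => ?_
  simpa [h] using (norm_nonneg _).trans_lt (norm_mul_iteratedDeriv_two_lt hne hcv hz)

theorem mapsTo_mul_schwarzQuotient (hne : ∀ z ∈ ball (0 : ℂ) 1, deriv f z ≠ 0)
    (hcv : ∀ z ∈ ball (0 : ℂ) 1, 0 < (1 + z * iteratedDeriv 2 f z / deriv f z).re) :
    MapsTo (fun z => z * schwarzQuotient f z) (ball 0 1) (ball 0 1) := by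
  intro z hz
  have hlt := norm_mul_iteratedDeriv_two_lt hne hcv hz
  simp only [mem_ball_zero_iff, schwarzQuotient]
  rw [← mul_div_assoc, norm_div]
  exact (div_lt_one ((norm_nonneg _).trans_lt hlt)).2 hlt

theorem schwarzQuotient_zero (hf1 : deriv f 0 = 1) :
    schwarzQuotient f 0 = iteratedDeriv 2 f 0 / 2 := by
  simp [schwarzQuotient, hf1]

theorem deriv_schwarzQuotient_zero (hf : AnalyticOnNhd ℂ f (ball 0 1)) (hf1 : deriv f 0 = 1) :
    deriv (schwarzQuotient f) 0 =
      3 * (iteratedDeriv 3 f 0 / 6 - (iteratedDeriv 2 f 0 / 2) ^ 2) := by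
  have h0 : (0 : ℂ) ∈ ball (0 : ℂ) 1 := mem_ball_self one_pos
  have hf₁ : HasDerivAt (deriv f) (iteratedDeriv 2 f 0) 0 := by
    rw [iteratedDeriv_succ, iteratedDeriv_one]
    exact (hf.deriv 0 h0).differentiableAt.hasDerivAt
  have hf₂ : HasDerivAt (iteratedDeriv 2 f) (iteratedDeriv 3 f 0) 0 := by
    rw [show iteratedDeriv 3 f = deriv (iteratedDeriv 2 f) from iteratedDeriv_succ]
    exact (hf.iteratedDeriv 2 0 h0).differentiableAt.hasDerivAt
  have hden := (hf₁.const_mul 2).add ((hasDerivAt_id' 0).mul hf₂)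
  have hq : HasDerivAt (schwarzQuotient f)
      ((iteratedDeriv 3 f 0 * 2 - iteratedDeriv 2 f 0 * (3 * iteratedDeriv 2 f 0)) / 2 ^ 2) 0 := by
    refine (hf₂.div hden (by simp [hf1])).congr_deriv ?_
    simp only [Pi.add_apply, Pi.mul_apply, hf1]
    ring
  rw [hq.deriv]
  ring

end Convex

theorem norm_neg_sq_sub_sq_le_two {a₂ a₃ : ℂ} (h : 3 * ‖a₃ - a₂ ^ 2‖ ≤ 1 - ‖a₂‖ ^ 2) :
    ‖(-a₂) ^ 2 - (2 * a₂ ^ 2 - a₃) ^ 2‖ ≤ 2 := by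
  have hA₃ : ‖2 * a₂ ^ 2 - a₃‖ ≤ ‖a₂‖ ^ 2 + ‖a₃ - a₂ ^ 2‖ := by
    rw [show 2 * a₂ ^ 2 - a₃ = a₂ ^ 2 - (a₃ - a₂ ^ 2) by ring, ← norm_pow]
    exact norm_sub_le _ _
  have ht : ‖a₂‖ ^ 2 ≤ 1 := by nlinarith [norm_nonneg (a₃ - a₂ ^ 2)]
  calc ‖(-a₂) ^ 2 - (2 * a₂ ^ 2 - a₃) ^ 2‖
      ≤ ‖a₂‖ ^ 2 + ‖2 * a₂ ^ 2 - a₃‖ ^ 2 :=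
        (norm_sub_le _ _).trans_eq (by rw [norm_pow, norm_pow, norm_neg])
    _ ≤ 2 := by nlinarith [norm_nonneg (2 * a₂ ^ 2 - a₃), norm_nonneg (a₃ - a₂ ^ 2)]

theorem symToeplitz22_convex_general (f : ℂ → ℂ)
    (hf : AnalyticOnNhd ℂ f (ball (0:ℂ) 1))
    (hf1 : deriv f 0 = 1)
    (hne : ∀ z ∈ ball (0:ℂ) 1, deriv f z ≠ 0)
    (hcv : ∀ z ∈ ball (0:ℂ) 1, 0 < (1 + z * iteratedDeriv 2 f z / deriv f z).re)
    (a₂ a₃ A₂ A₃ : ℂ)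
    (ha₂ : a₂ = iteratedDeriv 2 f 0 / 2)
    (ha₃ : a₃ = iteratedDeriv 3 f 0 / 6)
    (hA₂ : A₂ = -a₂)
    (hA₃ : A₃ = 2 * a₂ ^ 2 - a₃) :
    ‖A₂ ^ 2 - A₃ ^ 2‖ ≤ 2 := by
  have hd := differentiableOn_schwarzQuotient hf hne hcv
  have hpick := norm_deriv_zero_le_one_sub_sq_norm hd
    (mapsTo_closedBall_of_mapsTo_mul hd (mapsTo_mul_schwarzQuotient hne hcv))
  rw [deriv_schwarzQuotient_zero hf hf1, schwarzQuotient_zero hf1, ← ha₂, ← ha₃, norm_mul,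
    RCLike.norm_ofNat] at hpick
  subst hA₂ hA₃
  exact norm_neg_sq_sub_sq_le_two hpick

theorem symToeplitz22_convex (f : ℂ → ℂ)
    (hf : AnalyticOnNhd ℂ f (ball (0:ℂ) 1))
    (hf0 : f 0 = 0) (hf1 : deriv f 0 = 1)
    (hne : ∀ z ∈ ball (0:ℂ) 1, deriv f z ≠ 0)
    (hcv : ∀ z ∈ ball (0:ℂ) 1, 0 < (1 + z * iteratedDeriv 2 f z / deriv f z).re)
    (a₂ a₃ A₂ A₃ : ℂ)
    (ha₂ : a₂ = iteratedDeriv 2 f 0 / 2)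
    (ha₃ : a₃ = iteratedDeriv 3 f 0 / 6)
    (hA₂ : A₂ = -a₂)
    (hA₃ : A₃ = 2 * a₂ ^ 2 - a₃) :
    ‖A₂ ^ 2 - A₃ ^ 2‖ ≤ 2 :=
  symToeplitz22_convex_general f hf hf1 hne hcv a₂ a₃ A₂ A₃ ha₂ ha₃ hA₂ hA₃
end
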